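/- In the linear Gaussian setting, E_Y[KL(p_φ(θ|y) ‖ p(θ|y))] = (1/2)log(|Q|/|Q_φ|) + (1/2)Tr(Q⁻¹Q_φ) − m/2 + (1/2)(Δb + ΔR μ_Y)ᵀ Q⁻¹ (Δb + ΔR μ_Y) + (1/2)Tr(ΔRᵀ Q⁻¹ ΔR Σ_Y), where ΔR = R_φ − R, Δb = b_φ − b. -/

import Mathlib

open Matrix MeasureTheory Real

/-- Density of a multivariate Gaussian `N(μ, S)` on `ℝⁿ`. -/
noncomputable def gpdf {n : ℕ} (μ : Fin n → ℝ) (S : Matrix (Fin n) (Fin n) ℝ)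
    (x : Fin n → ℝ) : ℝ :=
  (Real.sqrt ((2 * Real.pi) ^ n * S.det))⁻¹ *
    Real.exp (-(1 / 2 : ℝ) * ((x - μ) ⬝ᵥ (S⁻¹ *ᵥ (x - μ))))



lemma integ1d_0 : Integrable fun t : ℝ => Real.exp (-(1/2 : ℝ) * t ^ 2) :=
  integrable_exp_neg_mul_sq (by norm_num)

lemma integ1d_1 : Integrable fun t : ℝ => t * Real.exp (-(1/2 : ℝ) * t ^ 2) :=
  integrable_mul_exp_neg_mul_sq (by norm_num)

lemma integ1d_2 : Integrable fun t : ℝ => t ^ 2 * Real.exp (-(1/2 : ℝ) * t ^ 2) := by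
  have := integrable_rpow_mul_exp_neg_mul_sq (b := 1/2) (by norm_num) (s := 2) (by norm_num)
  convert this using 2 with t
  rw [show ((2:ℝ) = ((2:ℕ):ℝ)) by norm_num, Real.rpow_natCast]

lemma int1d_0 : ∫ t : ℝ, Real.exp (-(1/2 : ℝ) * t ^ 2) = Real.sqrt (2 * π) := by
  rw [integral_gaussian]
  rw [show π / (1/2) = 2 * π by ring]

lemma int1d_1 : ∫ t : ℝ, t * Real.exp (-(1/2 : ℝ) * t ^ 2) = 0 := by
  have h := integral_neg_eq_self (fun t : ℝ => t * Real.exp (-(1/2 : ℝ) * t ^ 2)) volume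
  simp only [neg_mul, neg_sq] at h
  have : ∫ t : ℝ, -(t * Real.exp (-(1/2 : ℝ) * t ^ 2)) =
      ∫ t : ℝ, t * Real.exp (-(1/2 : ℝ) * t ^ 2) := by
    simpa using h
  rw [integral_neg] at this
  linarith

lemma int1d_2 : ∫ t : ℝ, t ^ 2 * Real.exp (-(1/2 : ℝ) * t ^ 2) = Real.sqrt (2 * π) := by
  have hu : ∀ x : ℝ, HasDerivAt (fun x : ℝ => x) 1 x := fun x => hasDerivAt_id x
  have hv : ∀ x : ℝ, HasDerivAt (fun x : ℝ => -Real.exp (-(1/2 : ℝ) * x ^ 2))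
      (x * Real.exp (-(1/2 : ℝ) * x ^ 2)) x := by
    intro x
    have h1 : HasDerivAt (fun x : ℝ => -(1/2 : ℝ) * x ^ 2) (-x) x := by
      simpa using ((hasDerivAt_pow 2 x).const_mul (-(1/2 : ℝ)))
    have : HasDerivAt (fun x : ℝ => -Real.exp (-(1/2 : ℝ) * x ^ 2)) (-(Real.exp (-(1/2 : ℝ) * x ^ 2) * -x)) x := (h1.exp).neg
    convert this using 1
    ring
  have i1 : Integrable ((fun x : ℝ => x) * fun x : ℝ => x * Real.exp (-(1/2 : ℝ) * x ^ 2)) := by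
    refine integ1d_2.congr ?_
    filter_upwards with x
    simp [Pi.mul_apply]; ring
  have i2 : Integrable ((fun _ : ℝ => (1:ℝ)) * fun x : ℝ => -Real.exp (-(1/2 : ℝ) * x ^ 2)) := by
    refine integ1d_0.neg.congr ?_
    filter_upwards with x
    simp [Pi.mul_apply]
  have i3 : Integrable ((fun x : ℝ => x) * fun x : ℝ => -Real.exp (-(1/2 : ℝ) * x ^ 2)) := by
    refine integ1d_1.neg.congr ?_
    filter_upwards with x
    simp [Pi.mul_apply]
  have h := integral_mul_deriv_eq_deriv_mul_of_integrable (fun x _ => hu x) (fun x _ => hv x) i1 i2 i3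
  rw [show (∫ x : ℝ, x * (x * Real.exp (-(1/2 : ℝ) * x ^ 2))) =
      ∫ x : ℝ, x ^ 2 * Real.exp (-(1/2 : ℝ) * x ^ 2) from by
        congr 1; funext x; ring] at h
  rw [h, show (∫ x : ℝ, (1:ℝ) * -Real.exp (-(1/2 : ℝ) * x ^ 2)) =
      ∫ x : ℝ, -Real.exp (-(1/2 : ℝ) * x ^ 2) from by congr 1; funext x; ring,
    integral_neg, int1d_0]
  ring

noncomputable def gstd {k : ℕ} (u : Fin k → ℝ) : ℝ := Real.exp (-(1/2 : ℝ) * (u ⬝ᵥ u))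

variable {k : ℕ}

lemma gstd_eq_prod (u : Fin k → ℝ) : gstd u = ∏ l, Real.exp (-(1/2 : ℝ) * (u l) ^ 2) := by
  rw [← Real.exp_sum, gstd, dotProduct, Finset.mul_sum]
  congr 1
  congr 1; funext l; ring

noncomputable def Fq {k : ℕ} (i j : Fin k) (l : Fin k) (t : ℝ) : ℝ :=
  (if l = i then t else 1) * (if l = j then t else 1) * Real.exp (-(1/2 : ℝ) * t ^ 2)

lemma Fq_eq (i j : Fin k) (u : Fin k → ℝ) :
    u i * u j * gstd u = ∏ l, Fq i j l (u l) := by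
  unfold Fq
  rw [Finset.prod_mul_distrib, Finset.prod_mul_distrib, gstd_eq_prod]
  congr 2 <;> simp

lemma Fq_integrable (i j l : Fin k) : Integrable (Fq i j l) := by
  unfold Fq
  by_cases hi : l = i <;> by_cases hj : l = j
  · simp only [if_pos hi, if_pos hj]
    exact integ1d_2.congr (by filter_upwards with t; ring)
  · simp only [if_pos hi, if_neg hj, mul_one]
    exact integ1d_1
  · simp only [if_neg hi, if_pos hj, one_mul]
    exact integ1d_1
  · simp only [if_neg hi, if_neg hj, one_mul]
    exact integ1d_0

lemma istd2 (i j : Fin k) : Integrable fun u : Fin k → ℝ => u i * u j * gstd u := by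
  refine (Integrable.fintype_prod (f := Fq i j) (fun l => Fq_integrable i j l)).congr ?_
  filter_upwards with u
  exact (Fq_eq i j u).symm

lemma int_Fq (i j l : Fin k) : ∫ t : ℝ, Fq i j l t =
    if (l = i) = (l = j) then Real.sqrt (2 * π) else 0 := by
  unfold Fq
  by_cases hi : l = i <;> by_cases hj : l = j
  · simp only [if_pos hi, if_pos hj]
    rw [if_pos (by rw [hi.symm.trans hj])]
    rw [show (∫ t : ℝ, t * t * Real.exp (-(1/2 : ℝ) * t ^ 2)) =
      ∫ t : ℝ, t ^ 2 * Real.exp (-(1/2:ℝ) * t ^ 2) from by congr 1; funext t; ring]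
    exact int1d_2
  · simp only [if_pos hi, if_neg hj, mul_one]
    rw [if_neg (fun (h : (l = i) = (l = j)) => hj (h ▸ hi))]
    exact int1d_1
  · simp only [if_neg hi, if_pos hj, one_mul]
    rw [if_neg (fun (h : (l = i) = (l = j)) => hi (h.symm ▸ hj))]
    exact int1d_1
  · simp only [if_neg hi, if_neg hj, one_mul]
    rw [if_pos (by simp [eq_iff_iff, hi, hj])]
    exact int1d_0

lemma prod2 (i j : Fin k) : ∫ u : Fin k → ℝ, u i * u j * gstd u =
    if i = j then Real.sqrt (2 * π) ^ k else 0 := by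
  rw [show (∫ u : Fin k → ℝ, u i * u j * gstd u) = ∫ u : Fin k → ℝ, ∏ l, Fq i j l (u l) from by
    congr 1; funext u; exact Fq_eq i j u]
  rw [integral_fintype_prod_volume_eq_prod (Fq i j)]
  rcases eq_or_ne i j with rfl | hij
  · rw [if_pos rfl, Finset.prod_congr rfl (fun l _ => int_Fq i i l)]
    simp
  · rw [if_neg hij]
    apply Finset.prod_eq_zero (Finset.mem_univ i)
    rw [int_Fq]
    rw [if_neg]
    simp [hij]

noncomputable def Fl {k : ℕ} (i : Fin k) (l : Fin k) (t : ℝ) : ℝ :=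
  (if l = i then t else 1) * Real.exp (-(1/2 : ℝ) * t ^ 2)

lemma Fl_eq (i : Fin k) (u : Fin k → ℝ) : u i * gstd u = ∏ l, Fl i l (u l) := by
  unfold Fl
  rw [Finset.prod_mul_distrib, gstd_eq_prod]
  congr 1
  simp

lemma Fl_integrable (i l : Fin k) : Integrable (Fl i l) := by
  unfold Fl
  by_cases hi : l = i
  · simp only [if_pos hi]
    exact integ1d_1
  · simp only [if_neg hi, one_mul]
    exact integ1d_0

lemma istd1 (i : Fin k) : Integrable fun u : Fin k → ℝ => u i * gstd u := by
  refine (Integrable.fintype_prod (f := Fl i) (fun l => Fl_integrable i l)).congr ?_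
  filter_upwards with u
  exact (Fl_eq i u).symm

lemma prod1 (i : Fin k) : ∫ u : Fin k → ℝ, u i * gstd u = 0 := by
  rw [show (∫ u : Fin k → ℝ, u i * gstd u) = ∫ u : Fin k → ℝ, ∏ l, Fl i l (u l) from by
    congr 1; funext u; exact Fl_eq i u]
  rw [integral_fintype_prod_volume_eq_prod (Fl i)]
  apply Finset.prod_eq_zero (Finset.mem_univ i)
  unfold Fl
  simp only [if_pos rfl]
  exact int1d_1

lemma istd0 : Integrable (gstd (k := k)) := by
  refine (Integrable.fintype_prod
    (f := fun _ : Fin k => fun t : ℝ => Real.exp (-(1/2 : ℝ) * t ^ 2)) (fun _ => integ1d_0)).congr ?_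
  filter_upwards with u
  exact (gstd_eq_prod u).symm

lemma prod0 : ∫ u : Fin k → ℝ, gstd u = Real.sqrt (2 * π) ^ k := by
  rw [show (∫ u : Fin k → ℝ, gstd u) =
    ∫ u : Fin k → ℝ, ∏ l, Real.exp (-(1/2 : ℝ) * (u l) ^ 2) from by
      congr 1; funext u; exact gstd_eq_prod u]
  rw [integral_fintype_prod_volume_eq_pow (fun t : ℝ => Real.exp (-(1/2 : ℝ) * t ^ 2)), int1d_0]
  simp

lemma istd_quad (M : Matrix (Fin k) (Fin k) ℝ) (w : Fin k → ℝ) (c : ℝ) :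
    Integrable fun u : Fin k → ℝ => (u ⬝ᵥ (M *ᵥ u) + w ⬝ᵥ u + c) * gstd u := by
  have e : ∀ u : Fin k → ℝ, (u ⬝ᵥ (M *ᵥ u) + w ⬝ᵥ u + c) * gstd u
      = (∑ i, ∑ j, M i j * (u i * u j * gstd u)) + (∑ i, w i * (u i * gstd u)) + c * gstd u := by
    intro u
    simp only [dotProduct, Matrix.mulVec, add_mul]
    congr 1
    congr 1
    · rw [Finset.sum_mul]
      refine Finset.sum_congr rfl fun i _ => ?_
      rw [Finset.mul_sum, Finset.sum_mul]
      exact Finset.sum_congr rfl fun j _ => by ring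
    · rw [Finset.sum_mul]
      exact Finset.sum_congr rfl fun i _ => by ring
  have i1 : Integrable fun u : Fin k → ℝ => ∑ i, ∑ j, M i j * (u i * u j * gstd u) := by
    apply integrable_finset_sum _ fun i _ => ?_
    apply integrable_finset_sum _ fun j _ => ?_
    exact (istd2 i j).const_mul (M i j)
  have i2 : Integrable fun u : Fin k → ℝ => ∑ i, w i * (u i * gstd u) :=
    integrable_finset_sum _ fun i _ => (istd1 i).const_mul (w i)
  have i3 : Integrable fun u : Fin k → ℝ => c * gstd u := istd0.const_mul c
  exact (((i1.add i2).add i3).congr (by filter_upwards with u; exact (e u).symm))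

lemma std_quad (M : Matrix (Fin k) (Fin k) ℝ) (w : Fin k → ℝ) (c : ℝ) :
    ∫ u : Fin k → ℝ, (u ⬝ᵥ (M *ᵥ u) + w ⬝ᵥ u + c) * gstd u
      = (M.trace + c) * Real.sqrt (2 * π) ^ k := by
  have e : ∀ u : Fin k → ℝ, (u ⬝ᵥ (M *ᵥ u) + w ⬝ᵥ u + c) * gstd u
      = (∑ i, ∑ j, M i j * (u i * u j * gstd u)) + (∑ i, w i * (u i * gstd u)) + c * gstd u := by
    intro u
    simp only [dotProduct, Matrix.mulVec, add_mul]
    congr 1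
    congr 1
    · rw [Finset.sum_mul]
      refine Finset.sum_congr rfl fun i _ => ?_
      rw [Finset.mul_sum, Finset.sum_mul]
      exact Finset.sum_congr rfl fun j _ => by ring
    · rw [Finset.sum_mul]
      exact Finset.sum_congr rfl fun i _ => by ring
  have i1 : Integrable fun u : Fin k → ℝ => ∑ i, ∑ j, M i j * (u i * u j * gstd u) := by
    apply integrable_finset_sum _ fun i _ => ?_
    apply integrable_finset_sum _ fun j _ => ?_
    exact (istd2 i j).const_mul (M i j)
  have i2 : Integrable fun u : Fin k → ℝ => ∑ i, w i * (u i * gstd u) :=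
    integrable_finset_sum _ fun i _ => (istd1 i).const_mul (w i)
  have i3 : Integrable fun u : Fin k → ℝ => c * gstd u := istd0.const_mul c
  rw [show (∫ u : Fin k → ℝ, (u ⬝ᵥ (M *ᵥ u) + w ⬝ᵥ u + c) * gstd u)
      = ∫ u : Fin k → ℝ, (∑ i, ∑ j, M i j * (u i * u j * gstd u))
        + (∑ i, w i * (u i * gstd u)) + c * gstd u from by congr 1; funext u; exact e u]
  have I12 : Integrable (fun u : Fin k → ℝ =>
      (∑ i, ∑ j, M i j * (u i * u j * gstd u)) + ∑ i, w i * (u i * gstd u)) volume := i1.add i2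
  rw [integral_add I12 i3, integral_add i1 i2]
  rw [integral_finset_sum _ fun i _ => integrable_finset_sum _ fun j _ =>
    (istd2 i j).const_mul (M i j)]
  simp_rw [integral_finset_sum _ fun j _ => (istd2 _ j).const_mul (M _ j)]
  rw [integral_finset_sum _ fun i _ => (istd1 i).const_mul (w i)]
  simp_rw [integral_const_mul, prod2, prod1, mul_zero, Finset.sum_const_zero, prod0, Matrix.trace,
    Matrix.diag]
  simp only [mul_ite, mul_zero, Finset.sum_ite_eq, Finset.mem_univ, if_true]
  rw [← Finset.sum_mul]
  ring

lemma integral_comp_affine {k : ℕ} (M : Matrix (Fin k) (Fin k) ℝ) (hM : M.det ≠ 0)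
    (c : Fin k → ℝ) (g : (Fin k → ℝ) → ℝ) (hg : AEStronglyMeasurable g (volume : Measure (Fin k → ℝ))) :
    ∫ x : Fin k → ℝ, g (M *ᵥ x + c) = |M.det|⁻¹ * ∫ x : Fin k → ℝ, g x := by
  have hunit : IsUnit M.det := isUnit_iff_ne_zero.mpr hM
  have h1 : ∀ x : Fin k → ℝ, M *ᵥ (x + M⁻¹ *ᵥ c) = M *ᵥ x + c := by
    intro x
    rw [Matrix.mulVec_add, Matrix.mulVec_mulVec, Matrix.mul_nonsing_inv _ hunit, Matrix.one_mulVec]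
  have h2 : (∫ x : Fin k → ℝ, g (M *ᵥ x + c)) = ∫ x : Fin k → ℝ, g (M *ᵥ x) := by
    rw [← integral_add_right_eq_self (μ := (volume : Measure (Fin k → ℝ)))
      (fun x => g (M *ᵥ x)) (M⁻¹ *ᵥ c)]
    congr 1; funext x; rw [h1]
  rw [h2]
  have hmap := Real.map_matrix_volume_pi_eq_smul_volume_pi hM
  have hmeas : Measurable (Matrix.toLin' M) :=
    (Matrix.toLin' M).continuous_of_finiteDimensional.measurable
  have h3 : (∫ x : Fin k → ℝ, g (M *ᵥ x))
      = ∫ y, g y ∂(Measure.map (Matrix.toLin' M) (volume : Measure (Fin k → ℝ))) := by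
    rw [integral_map hmeas.aemeasurable]
    · simp only [Matrix.toLin'_apply]
    · rw [hmap]
      exact hg.mono_ac Measure.smul_absolutelyContinuous
  rw [h3, hmap, integral_smul_measure, ENNReal.toReal_ofReal (abs_nonneg _), abs_inv]
  rfl

lemma gpdf_cont {k : ℕ} (μ : Fin k → ℝ) (S : Matrix (Fin k) (Fin k) ℝ) :
    Continuous (gpdf μ S) := by
  unfold gpdf
  apply Continuous.mul continuous_const
  apply Real.continuous_exp.comp
  apply Continuous.mul continuous_const
  simp only [dotProduct, Matrix.mulVec]
  fun_prop

lemma quad_cont {k : ℕ} (μ w : Fin k → ℝ) (A : Matrix (Fin k) (Fin k) ℝ) (c : ℝ) :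
    Continuous (fun x : Fin k → ℝ => (x - μ) ⬝ᵥ (A *ᵥ (x - μ)) + w ⬝ᵥ (x - μ) + c) := by
  simp only [dotProduct, Matrix.mulVec]
  fun_prop

open scoped MatrixOrder in
lemma gauss_moment {k : ℕ} {S : Matrix (Fin k) (Fin k) ℝ} (hS : S.PosDef) (μ : Fin k → ℝ)
    (A : Matrix (Fin k) (Fin k) ℝ) (v : Fin k → ℝ) (c : ℝ) :
    ∫ x : Fin k → ℝ, gpdf μ S x * ((x - μ) ⬝ᵥ (A *ᵥ (x - μ)) + v ⬝ᵥ (x - μ) + c)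
      = (A * S).trace + c := by
  set L := CFC.sqrt S with hLdef
  have hLL : L * L = S := CFC.sqrt_mul_sqrt_self S hS.posSemidef.nonneg
  have hLsym : Lᵀ = L := by
    have := (CFC.sqrt_nonneg S).posSemidef.isHermitian
    simpa [Matrix.IsHermitian, Matrix.conjTranspose_eq_transpose_of_trivial] using this
  have hdetS : 0 < S.det := hS.det_pos
  have hdetL2 : L.det * L.det = S.det := by rw [← Matrix.det_mul, hLL]
  have hdetL : L.det ≠ 0 := by
    intro h; rw [h, mul_zero] at hdetL2; exact (ne_of_gt hdetS) hdetL2.symm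
  have habs : |L.det| = Real.sqrt S.det := by rw [← hdetL2, Real.sqrt_mul_self_eq_abs]
  have hunitL : IsUnit L.det := isUnit_iff_ne_zero.mpr hdetL
  -- key matrix identity
  have hkey : L * S⁻¹ * L = 1 := by
    rw [← hLL, Matrix.mul_inv_rev, ← Matrix.mul_assoc, Matrix.mul_nonsing_inv _ hunitL, Matrix.one_mul, Matrix.nonsing_inv_mul _ hunitL]
  set g : (Fin k → ℝ) → ℝ :=
    fun x => gpdf μ S x * ((x - μ) ⬝ᵥ (A *ᵥ (x - μ)) + v ⬝ᵥ (x - μ) + c) with hgdef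
  have hgc : Continuous g := (gpdf_cont μ S).mul (quad_cont μ v A c)
  have hca := integral_comp_affine L hdetL μ g hgc.aestronglyMeasurable
  have hpt : ∀ u : Fin k → ℝ, g (L *ᵥ u + μ)
      = (Real.sqrt ((2 * π) ^ k * S.det))⁻¹ *
        ((u ⬝ᵥ ((L * A * L) *ᵥ u) + (L *ᵥ v) ⬝ᵥ u + c) * gstd u) := by
    intro u
    have hsub : (L *ᵥ u + μ) - μ = L *ᵥ u := by simp
    have dvv : ∀ (B : Matrix (Fin k) (Fin k) ℝ) (w : Fin k → ℝ),
        (L *ᵥ u) ⬝ᵥ (B *ᵥ w) = u ⬝ᵥ ((Lᵀ * B) *ᵥ w) := by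
      intro B w
      rw [Matrix.dotProduct_mulVec, Matrix.vecMul_mulVec, ← Matrix.dotProduct_mulVec, ← Matrix.mulVec_mulVec]
    have hq1 : (L *ᵥ u) ⬝ᵥ (S⁻¹ *ᵥ (L *ᵥ u)) = u ⬝ᵥ u := by
      rw [Matrix.mulVec_mulVec, dvv, hLsym, ← Matrix.mul_assoc, hkey, Matrix.one_mulVec]
    have hq2 : (L *ᵥ u) ⬝ᵥ (A *ᵥ (L *ᵥ u)) = u ⬝ᵥ ((L * A * L) *ᵥ u) := by
      rw [Matrix.mulVec_mulVec, dvv, hLsym, ← Matrix.mul_assoc]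
    have hq3 : v ⬝ᵥ (L *ᵥ u) = (L *ᵥ v) ⬝ᵥ u := by
      rw [Matrix.dotProduct_mulVec, ← Matrix.mulVec_transpose, hLsym]
    rw [hgdef]
    simp only [gpdf, hsub, hq1, hq2, hq3, gstd]
    ring
  rw [show (∫ x : Fin k → ℝ, g x) = |L.det| * ∫ u : Fin k → ℝ, g (L *ᵥ u + μ) from by
    rw [hca, ← mul_assoc, mul_inv_cancel₀ (by simpa using hdetL), one_mul]]
  rw [show (∫ u : Fin k → ℝ, g (L *ᵥ u + μ)) = ∫ u : Fin k → ℝ,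
      (Real.sqrt ((2 * π) ^ k * S.det))⁻¹ *
        ((u ⬝ᵥ ((L * A * L) *ᵥ u) + (L *ᵥ v) ⬝ᵥ u + c) * gstd u) from by
    congr 1; funext u; exact hpt u]
  rw [integral_const_mul, std_quad]
  have htr : (L * A * L).trace = (A * S).trace := by
    rw [Matrix.trace_mul_comm, ← Matrix.mul_assoc, hLL, Matrix.trace_mul_comm]
  have hsqpow : Real.sqrt ((2*π)^k) = Real.sqrt (2*π) ^ k := by
    rw [show (2*π : ℝ)^k = (Real.sqrt (2*π) ^ k)^2 by
      rw [← pow_mul, mul_comm k 2, pow_mul, Real.sq_sqrt (by positivity)],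
      Real.sqrt_sq (by positivity)]
  have hnorm : |L.det| * ((Real.sqrt ((2 * π) ^ k * S.det))⁻¹ * Real.sqrt (2 * π) ^ k) = 1 := by
    rw [habs, Real.sqrt_mul (by positivity), hsqpow, mul_inv]
    field_simp
  calc |L.det| * ((Real.sqrt ((2 * π) ^ k * S.det))⁻¹ * (((L * A * L).trace + c) * Real.sqrt (2 * π) ^ k))
      = ((L * A * L).trace + c) * (|L.det| * ((Real.sqrt ((2 * π) ^ k * S.det))⁻¹ * Real.sqrt (2 * π) ^ k)) := by ring
    _ = (A * S).trace + c := by rw [hnorm, htr, mul_one]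

lemma gpdf_pos {k : ℕ} {S : Matrix (Fin k) (Fin k) ℝ} (hS : S.PosDef) (μ x : Fin k → ℝ) :
    0 < gpdf μ S x := by
  unfold gpdf
  have h1 : 0 < (2 * π) ^ k * S.det := by have := hS.det_pos; positivity
  positivity

lemma dot_shift {k : ℕ} {P : Matrix (Fin k) (Fin k) ℝ} (hsym : Pᵀ = P) (z δ : Fin k → ℝ) :
    (z + δ) ⬝ᵥ (P *ᵥ (z + δ)) = z ⬝ᵥ (P *ᵥ z) + 2 * ((P *ᵥ δ) ⬝ᵥ z) + δ ⬝ᵥ (P *ᵥ δ) := by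
  have h1 : δ ⬝ᵥ (P *ᵥ z) = (P *ᵥ δ) ⬝ᵥ z := by
    rw [Matrix.dotProduct_mulVec, ← Matrix.mulVec_transpose, hsym]
  have h2 : z ⬝ᵥ (P *ᵥ δ) = (P *ᵥ δ) ⬝ᵥ z := dotProduct_comm _ _
  simp only [Matrix.mulVec_add, add_dotProduct, dotProduct_add, h1, h2]
  ring

lemma log_gpdf {k : ℕ} {S : Matrix (Fin k) (Fin k) ℝ} (hS : S.PosDef) (μ x : Fin k → ℝ) :
    Real.log (gpdf μ S x) = -(1/2 : ℝ) * Real.log ((2 * π) ^ k * S.det)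
      - (1/2 : ℝ) * ((x - μ) ⬝ᵥ (S⁻¹ *ᵥ (x - μ))) := by
  have hpos : 0 < (2 * π) ^ k * S.det := by have := hS.det_pos; positivity
  unfold gpdf
  rw [Real.log_mul (by positivity) (Real.exp_pos _).ne', Real.log_exp, Real.log_inv,
    Real.log_sqrt hpos.le]
  ring

lemma kl_inner {m : ℕ} {Q Qφ : Matrix (Fin m) (Fin m) ℝ} (hQ : Q.PosDef) (hQφ : Qφ.PosDef)
    (μ1 μ2 : Fin m → ℝ) :
    ∫ θ : Fin m → ℝ, gpdf μ1 Qφ θ * Real.log (gpdf μ1 Qφ θ / gpdf μ2 Q θ)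
      = (1/2 : ℝ) * Real.log (Q.det / Qφ.det) + (1/2 : ℝ) * (Q⁻¹ * Qφ).trace - m/2
        + (1/2 : ℝ) * ((μ1 - μ2) ⬝ᵥ (Q⁻¹ *ᵥ (μ1 - μ2))) := by
  have hdQ : 0 < Q.det := hQ.det_pos
  have hdP : 0 < Qφ.det := hQφ.det_pos
  have hQsym : Qᵀ = Q := by
    have := hQ.isHermitian
    simpa [Matrix.IsHermitian, Matrix.conjTranspose_eq_transpose_of_trivial] using this
  have hiQsym : (Q⁻¹)ᵀ = Q⁻¹ := by
    rw [Matrix.transpose_nonsing_inv, hQsym]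
  set δ : Fin m → ℝ := μ1 - μ2 with hδ
  set A : Matrix (Fin m) (Fin m) ℝ := (1/2 : ℝ) • (Q⁻¹ - Qφ⁻¹) with hA
  set v : Fin m → ℝ := Q⁻¹ *ᵥ δ with hv
  set c : ℝ := (1/2 : ℝ) * Real.log (Q.det / Qφ.det) + (1/2 : ℝ) * (δ ⬝ᵥ (Q⁻¹ *ᵥ δ)) with hc
  have hpt : ∀ θ : Fin m → ℝ, gpdf μ1 Qφ θ * Real.log (gpdf μ1 Qφ θ / gpdf μ2 Q θ)
      = gpdf μ1 Qφ θ * ((θ - μ1) ⬝ᵥ (A *ᵥ (θ - μ1)) + v ⬝ᵥ (θ - μ1) + c) := by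
    intro θ
    congr 1
    rw [Real.log_div (gpdf_pos hQφ μ1 θ).ne' (gpdf_pos hQ μ2 θ).ne',
      log_gpdf hQφ, log_gpdf hQ]
    have hshift : θ - μ2 = (θ - μ1) + δ := by rw [hδ]; abel
    rw [hshift, dot_shift hiQsym]
    have hAz : (θ - μ1) ⬝ᵥ (A *ᵥ (θ - μ1)) =
        (1/2 : ℝ) * ((θ - μ1) ⬝ᵥ (Q⁻¹ *ᵥ (θ - μ1))) -
        (1/2 : ℝ) * ((θ - μ1) ⬝ᵥ (Qφ⁻¹ *ᵥ (θ - μ1))) := by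
      rw [hA, Matrix.smul_mulVec, Matrix.sub_mulVec, dotProduct_smul,
        dotProduct_sub, smul_eq_mul]
      ring
    have hlogs : Real.log ((2 * π) ^ m * Q.det) - Real.log ((2 * π) ^ m * Qφ.det)
        = Real.log (Q.det / Qφ.det) := by
      rw [Real.log_mul (by positivity) hdQ.ne', Real.log_mul (by positivity) hdP.ne',
        Real.log_div hdQ.ne' hdP.ne']
      ring
    rw [hAz, hc, hv, ← hlogs]
    have hvdot : v ⬝ᵥ (θ - μ1) = (Q⁻¹ *ᵥ δ) ⬝ᵥ (θ - μ1) := by rw [hv]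
    ring
  rw [show (∫ θ : Fin m → ℝ, gpdf μ1 Qφ θ * Real.log (gpdf μ1 Qφ θ / gpdf μ2 Q θ))
      = ∫ θ : Fin m → ℝ, gpdf μ1 Qφ θ * ((θ - μ1) ⬝ᵥ (A *ᵥ (θ - μ1)) + v ⬝ᵥ (θ - μ1) + c)
      from by congr 1; funext θ; exact hpt θ]
  rw [gauss_moment hQφ μ1 A v c]
  have htr : (A * Qφ).trace = (1/2 : ℝ) * (Q⁻¹ * Qφ).trace - m/2 := by
    rw [hA, Matrix.smul_mul, Matrix.trace_smul, Matrix.sub_mul, Matrix.trace_sub,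
      Matrix.nonsing_inv_mul _ (isUnit_iff_ne_zero.mpr hdP.ne'), Matrix.trace_one]
    simp [smul_eq_mul]
    ring
  rw [htr, hc]
  ring

lemma dot_rect {m n : ℕ} (B : Matrix (Fin m) (Fin n) ℝ) (M : Matrix (Fin m) (Fin m) ℝ)
    (z : Fin n → ℝ) : (B *ᵥ z) ⬝ᵥ (M *ᵥ (B *ᵥ z)) = z ⬝ᵥ ((Bᵀ * M * B) *ᵥ z) := by
  rw [Matrix.mulVec_mulVec, Matrix.dotProduct_mulVec, Matrix.vecMul_mulVec,
    ← Matrix.dotProduct_mulVec, ← Matrix.mul_assoc]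

lemma dot_cross {m n : ℕ} (B : Matrix (Fin m) (Fin n) ℝ) (u : Fin m → ℝ) (z : Fin n → ℝ) :
    u ⬝ᵥ (B *ᵥ z) = (Bᵀ *ᵥ u) ⬝ᵥ z := by
  rw [Matrix.dotProduct_mulVec, ← Matrix.mulVec_transpose]

/-- Expectation over `Y ~ N(μ_Y, Σ_Y)` of the KL divergence between the variational
posterior `N(R_φ y + b_φ, Q_φ)` and the true posterior `N(R y + b, Q)`:
`E_Y[KL] = ½ log(|Q|/|Q_φ|) + ½ Tr(Q⁻¹Q_φ) − m/2 + ½‖Δb + ΔR μ_Y‖²_{Q⁻¹}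
+ ½ Tr(ΔRᵀ Q⁻¹ ΔR Σ_Y)` where `ΔR = R_φ − R`, `Δb = b_φ − b`. -/
theorem stmt12 {m n : ℕ} (μY : Fin n → ℝ) (SigY : Matrix (Fin n) (Fin n) ℝ)
    (hSigY : SigY.PosDef)
    (R Rφ : Matrix (Fin m) (Fin n) ℝ) (b bφ : Fin m → ℝ)
    (Q Qφ : Matrix (Fin m) (Fin m) ℝ) (hQ : Q.PosDef) (hQφ : Qφ.PosDef) :
    (∫ y : Fin n → ℝ, gpdf μY SigY y *
        ∫ θ : Fin m → ℝ, gpdf (Rφ *ᵥ y + bφ) Qφ θ *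
          Real.log (gpdf (Rφ *ᵥ y + bφ) Qφ θ / gpdf (R *ᵥ y + b) Q θ))
      = (1 / 2) * Real.log (Q.det / Qφ.det) + (1 / 2) * (Q⁻¹ * Qφ).trace - m / 2
        + (1 / 2) * (((bφ - b) + (Rφ - R) *ᵥ μY) ⬝ᵥ (Q⁻¹ *ᵥ ((bφ - b) + (Rφ - R) *ᵥ μY)))
        + (1 / 2) * ((Rφ - R)ᵀ * Q⁻¹ * (Rφ - R) * SigY).trace := by

  have hQsym : Qᵀ = Q := by
    have := hQ.isHermitian
    simpa [Matrix.IsHermitian, Matrix.conjTranspose_eq_transpose_of_trivial] using this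
  have hiQsym : (Q⁻¹)ᵀ = Q⁻¹ := by rw [Matrix.transpose_nonsing_inv, hQsym]
  set ΔR : Matrix (Fin m) (Fin n) ℝ := Rφ - R with hΔR
  set Δb : Fin m → ℝ := bφ - b with hΔb
  set e : Fin m → ℝ := Δb + ΔR *ᵥ μY with he
  set C0 : ℝ := (1/2 : ℝ) * Real.log (Q.det / Qφ.det) + (1/2 : ℝ) * (Q⁻¹ * Qφ).trace - m/2
    with hC0
  set A2 : Matrix (Fin n) (Fin n) ℝ := (1/2 : ℝ) • (ΔRᵀ * Q⁻¹ * ΔR) with hA2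
  set v2 : Fin n → ℝ := ΔRᵀ *ᵥ (Q⁻¹ *ᵥ e) with hv2
  set c2 : ℝ := (1/2 : ℝ) * (e ⬝ᵥ (Q⁻¹ *ᵥ e)) with hc2
  have hinner : ∀ y : Fin n → ℝ,
      (∫ θ : Fin m → ℝ, gpdf (Rφ *ᵥ y + bφ) Qφ θ *
        Real.log (gpdf (Rφ *ᵥ y + bφ) Qφ θ / gpdf (R *ᵥ y + b) Q θ))
      = C0 + (1/2 : ℝ) * ((ΔR *ᵥ y + Δb) ⬝ᵥ (Q⁻¹ *ᵥ (ΔR *ᵥ y + Δb))) := by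
    intro y
    rw [kl_inner hQ hQφ (Rφ *ᵥ y + bφ) (R *ᵥ y + b)]
    have hd : (Rφ *ᵥ y + bφ) - (R *ᵥ y + b) = ΔR *ᵥ y + Δb := by
      rw [hΔR, hΔb, Matrix.sub_mulVec]; abel
    rw [hd, hC0]
  have hpt : ∀ y : Fin n → ℝ, gpdf μY SigY y *
      (∫ θ : Fin m → ℝ, gpdf (Rφ *ᵥ y + bφ) Qφ θ *
        Real.log (gpdf (Rφ *ᵥ y + bφ) Qφ θ / gpdf (R *ᵥ y + b) Q θ))
      = gpdf μY SigY y *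
        ((y - μY) ⬝ᵥ (A2 *ᵥ (y - μY)) + v2 ⬝ᵥ (y - μY) + (C0 + c2)) := by
    intro y
    rw [hinner y]
    congr 1
    have hw : ΔR *ᵥ y + Δb = ΔR *ᵥ (y - μY) + e := by
      rw [he, Matrix.mulVec_sub]; abel
    rw [hw, dot_shift hiQsym]
    have h1 : (ΔR *ᵥ (y - μY)) ⬝ᵥ (Q⁻¹ *ᵥ (ΔR *ᵥ (y - μY)))
        = (y - μY) ⬝ᵥ ((ΔRᵀ * Q⁻¹ * ΔR) *ᵥ (y - μY)) := dot_rect ΔR Q⁻¹ (y - μY)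
    have h2 : (Q⁻¹ *ᵥ e) ⬝ᵥ (ΔR *ᵥ (y - μY)) = v2 ⬝ᵥ (y - μY) := by
      rw [hv2, dot_cross]
    have h3 : (y - μY) ⬝ᵥ (A2 *ᵥ (y - μY))
        = (1/2 : ℝ) * ((y - μY) ⬝ᵥ ((ΔRᵀ * Q⁻¹ * ΔR) *ᵥ (y - μY))) := by
      rw [hA2, Matrix.smul_mulVec, dotProduct_smul, smul_eq_mul]
    rw [h3, ← h1, ← h2, hc2]
    ring
  rw [show (∫ y : Fin n → ℝ, gpdf μY SigY y *
      ∫ θ : Fin m → ℝ, gpdf (Rφ *ᵥ y + bφ) Qφ θ *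
        Real.log (gpdf (Rφ *ᵥ y + bφ) Qφ θ / gpdf (R *ᵥ y + b) Q θ))
      = ∫ y : Fin n → ℝ, gpdf μY SigY y *
        ((y - μY) ⬝ᵥ (A2 *ᵥ (y - μY)) + v2 ⬝ᵥ (y - μY) + (C0 + c2))
      from by congr 1; funext y; exact hpt y]
  rw [gauss_moment hSigY μY A2 v2 (C0 + c2)]
  have htr : (A2 * SigY).trace = (1/2 : ℝ) * ((ΔRᵀ * Q⁻¹ * ΔR) * SigY).trace := by
    rw [hA2, Matrix.smul_mul, Matrix.trace_smul, smul_eq_mul]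
  rw [htr, hC0, hc2]
  rw [show ΔRᵀ * Q⁻¹ * ΔR * SigY = (Rφ - R)ᵀ * Q⁻¹ * (Rφ - R) * SigY from by rw [hΔR]]
  rw [show (e : Fin m → ℝ) = (bφ - b) + (Rφ - R) *ᵥ μY from by rw [he, hΔb, hΔR]]
  ring
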